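/- arXiv:2504.20813 — 2 statements merged into one kernel-verified Lean document; each statement's English description precedes it below -/
import Mathlib

section
/- If u^{m+1} restricted to each cell I_j is the L²(I_j)-orthogonal projection characterized by ∫_{I_j} u^{m+1} Ψ dx = ∫_{I_j^*} u^m Ψ(· + a) dx for all Ψ in a finite-dimensional subspace containing u^{m+1}|_{I_j}, where I_j^* = I_j − a, then ∑_j ∫_{I_j} |u^{m+1}|² dx ≤ ∫₀^L |u^m|² dx. (Discrete L² stability of the semi-Lagrangian DG step for constant advection.) -/
open MeasureTheory

lemma SLDG_cell (p q a : ℝ) (hpq : p < q) (u0 u1 : ℝ → ℝ)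
    (h0 : IntegrableOn (fun y => u0 y ^ 2) (Set.Ioc (p - a) (q - a)))
    (h1 : IntegrableOn (fun y => u1 y ^ 2) (Set.Ioc p q))
    (hvar : ∫ y in Set.Ioc p q, u1 y * Set.indicator (Set.Ioc p q) u1 y
      = ∫ y in Set.Ioc (p - a) (q - a), u0 y * Set.indicator (Set.Ioc p q) u1 (y + a)) :
    ∫ y in Set.Ioc p q, u1 y ^ 2 ≤ ∫ y in Set.Ioc (p - a) (q - a), u0 y ^ 2 := by
  have hA : (∫ y in Set.Ioc p q, u1 y * Set.indicator (Set.Ioc p q) u1 y)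
      = ∫ y in Set.Ioc p q, u1 y ^ 2 := by
    refine setIntegral_congr_fun measurableSet_Ioc fun y hy => ?_
    simp [Set.indicator_of_mem hy, sq]
  have hBnonneg : 0 ≤ ∫ y in Set.Ioc (p - a) (q - a), u0 y ^ 2 :=
    setIntegral_nonneg measurableSet_Ioc fun y _ => sq_nonneg _
  have h1' : IntegrableOn (fun y => u1 (y + a) ^ 2) (Set.Ioc (p - a) (q - a)) := by
    have := (intervalIntegrable_iff_integrableOn_Ioc_of_le hpq.le).2 h1
    have := (this.comp_add_right a)
    simpa [sub_add_cancel] using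
      (intervalIntegrable_iff_integrableOn_Ioc_of_le (by linarith : p - a ≤ q - a)).1 this
  have htrans : ∫ y in Set.Ioc (p - a) (q - a), u1 (y + a) ^ 2
      = ∫ y in Set.Ioc p q, u1 y ^ 2 := by
    rw [← intervalIntegral.integral_of_le (by linarith : p - a ≤ q - a),
      ← intervalIntegral.integral_of_le hpq.le,
      intervalIntegral.integral_comp_add_right (fun y => u1 y ^ 2)]
    norm_num
  by_cases hg : IntegrableOn (fun y => u0 y * Set.indicator (Set.Ioc p q) u1 (y + a))
      (Set.Ioc (p - a) (q - a))
  · have hle : ∫ y in Set.Ioc (p - a) (q - a), u0 y * Set.indicator (Set.Ioc p q) u1 (y + a)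
        ≤ ∫ y in Set.Ioc (p - a) (q - a), (u0 y ^ 2 + u1 (y + a) ^ 2) / 2 := by
      refine setIntegral_mono_on hg ((h0.add h1').div_const 2) measurableSet_Ioc
        fun y hy => ?_
      have hmem : y + a ∈ Set.Ioc p q := ⟨by linarith [hy.1], by linarith [hy.2]⟩
      rw [Set.indicator_of_mem hmem]
      nlinarith [sq_nonneg (u0 y - u1 (y + a))]
    have hsplit : ∫ y in Set.Ioc (p - a) (q - a), (u0 y ^ 2 + u1 (y + a) ^ 2) / 2
        = ((∫ y in Set.Ioc (p - a) (q - a), u0 y ^ 2)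
          + ∫ y in Set.Ioc (p - a) (q - a), u1 (y + a) ^ 2) / 2 := by
      rw [← integral_add h0 h1', ← integral_div]
    rw [hA] at hvar
    rw [hvar] at *
    rw [hsplit, htrans] at hle
    linarith
  · have : ∫ y in Set.Ioc (p - a) (q - a), u0 y * Set.indicator (Set.Ioc p q) u1 (y + a) = 0 :=
      integral_undef hg
    rw [hA, this] at hvar
    rw [hvar]; exact hBnonneg

/-- Discrete L² stability of the semi-Lagrangian DG step for constant advection:
if on each cell `I_j` the update `u¹` lies in a finite-dimensional subspace `V_j`
and satisfies `∫_{I_j} u¹ Ψ = ∫_{I_j − a} u⁰(y) Ψ(y + a) dy` for all `Ψ ∈ V_j`,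
then `∑_j ∫_{I_j} |u¹|² ≤ ∫₀^L |u⁰|²`. -/
theorem SLDG_L2_stability
    (L a : ℝ) (hL : 0 < L) (N : ℕ) (hN : 0 < N)
    (x : Fin (N + 1) → ℝ) (hmono : StrictMono x)
    (h0 : x 0 = 0) (hlast : x (Fin.last N) = L)
    (u0 u1 : ℝ → ℝ)
    (hper : Function.Periodic u0 L)
    (hsq0 : LocallyIntegrable (fun y => u0 y ^ 2))
    (hsq1 : ∀ j : Fin N, IntegrableOn (fun y => u1 y ^ 2)
      (Set.Ioc (x j.castSucc) (x j.succ)))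
    (V : Fin N → Submodule ℝ (ℝ → ℝ))
    (hfd : ∀ j, FiniteDimensional ℝ (V j))
    (hmem : ∀ j : Fin N, Set.indicator (Set.Ioc (x j.castSucc) (x j.succ)) u1 ∈ V j)
    (hvar : ∀ j : Fin N, ∀ Ψ ∈ V j,
      ∫ y in Set.Ioc (x j.castSucc) (x j.succ), u1 y * Ψ y
        = ∫ y in Set.Ioc (x j.castSucc - a) (x j.succ - a), u0 y * Ψ (y + a)) :
    (∑ j : Fin N, ∫ y in Set.Ioc (x j.castSucc) (x j.succ), u1 y ^ 2)
      ≤ ∫ y in Set.Ioc (0:ℝ) L, u0 y ^ 2 := by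
  have hcell : ∀ j : Fin N,
      (∫ y in Set.Ioc (x j.castSucc) (x j.succ), u1 y ^ 2)
        ≤ ∫ y in Set.Ioc (x j.castSucc - a) (x j.succ - a), u0 y ^ 2 := by
    intro j
    exact SLDG_cell (x j.castSucc) (x j.succ) a (hmono ((Fin.castSucc_lt_succ : j.castSucc < j.succ))) u0 u1
      ((hsq0.integrableOn_isCompact isCompact_Icc).mono_set Set.Ioc_subset_Icc_self)
      (hsq1 j) (hvar j _ (hmem j))
  have hsum_eq :
      (∑ j : Fin N, ∫ y in Set.Ioc (x j.castSucc - a) (x j.succ - a), u0 y ^ 2)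
        = ∫ y in Set.Ioc (0:ℝ) L, u0 y ^ 2 := by
    set c : ℕ → ℝ := fun k => x ⟨min k N, Nat.lt_succ_of_le (min_le_right k N)⟩ - a with hc
    have hcj : ∀ j : Fin N, c j.val = x j.castSucc - a ∧ c (j.val + 1) = x j.succ - a := by
      intro j
      have e1 : (⟨min j.val N, Nat.lt_succ_of_le (min_le_right _ N)⟩ : Fin (N+1)) = j.castSucc :=
        Fin.ext (by simp [Nat.min_eq_left j.isLt.le])
      have e2 : (⟨min (j.val + 1) N, Nat.lt_succ_of_le (min_le_right _ N)⟩ : Fin (N+1)) = j.succ :=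
        Fin.ext (by simp [Nat.min_eq_left (Nat.succ_le_of_lt j.isLt)])
      constructor
      · simp only [hc]; rw [e1]
      · simp only [hc]; rw [e2]
    have hint : ∀ k, IntervalIntegrable (fun y => u0 y ^ 2) volume (c k) (c (k+1)) :=
      fun k => intervalIntegrable_iff.2
        ((hsq0.integrableOn_isCompact isCompact_uIcc).mono_set Set.Ioc_subset_Icc_self)
    have hsum : ∑ k ∈ Finset.range N, ∫ y in c k..c (k+1), u0 y ^ 2
        = ∫ y in (c 0)..(c N), u0 y ^ 2 :=
      intervalIntegral.sum_integral_adjacent_intervals (fun k _ => hint k)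
    have hstep : ∀ j : Fin N, (∫ y in Set.Ioc (x j.castSucc - a) (x j.succ - a), u0 y ^ 2)
        = ∫ y in c j.val..c (j.val + 1), u0 y ^ 2 := by
      intro j
      rw [(hcj j).1, (hcj j).2, intervalIntegral.integral_of_le
        (by have := hmono ((Fin.castSucc_lt_succ : j.castSucc < j.succ)); linarith)]
    have hc0 : c 0 = -a := by
      have e : (⟨min 0 N, Nat.lt_succ_of_le (min_le_right 0 N)⟩ : Fin (N+1)) = 0 :=
        Fin.ext (by simp)
      simp only [hc]; rw [e, h0]; ring
    have hcN : c N = L - a := by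
      have e : (⟨min N N, Nat.lt_succ_of_le (min_le_right N N)⟩ : Fin (N+1)) = Fin.last N :=
        Fin.ext (by simp [Fin.last])
      simp only [hc]; rw [e, hlast]
    have hper2 : Function.Periodic (fun y => u0 y ^ 2) L := fun y => by simp [hper y]
    calc (∑ j : Fin N, ∫ y in Set.Ioc (x j.castSucc - a) (x j.succ - a), u0 y ^ 2)
        = ∑ k ∈ Finset.range N, ∫ y in c k..c (k+1), u0 y ^ 2 := by
          rw [← Fin.sum_univ_eq_sum_range]; exact Finset.sum_congr rfl fun j _ => hstep j
      _ = ∫ y in (c 0)..(c N), u0 y ^ 2 := hsum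
      _ = ∫ y in (-a)..(-a + L), u0 y ^ 2 := by rw [hc0, hcN]; congr 1; ring
      _ = ∫ y in (0:ℝ)..(0 + L), u0 y ^ 2 := hper2.intervalIntegral_add_eq (-a) 0
      _ = ∫ y in Set.Ioc (0:ℝ) L, u0 y ^ 2 := by
          rw [zero_add, intervalIntegral.integral_of_le hL.le]
  calc (∑ j : Fin N, ∫ y in Set.Ioc (x j.castSucc) (x j.succ), u1 y ^ 2)
      ≤ ∑ j : Fin N, ∫ y in Set.Ioc (x j.castSucc - a) (x j.succ - a), u0 y ^ 2 :=
        Finset.sum_le_sum fun j _ => hcell j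
    _ = ∫ y in Set.Ioc (0:ℝ) L, u0 y ^ 2 := hsum_eq
end

section
/- Let the semi-discrete field update be E^{m+1} = ((λ² − θ)/(λ² + θ)) E^m − (Δt/(λ² + θ)) J^m with θ = (Δt²/4) n and define J^{m+1} = J^m + Δt n (E^m + E^{m+1})/2. Then λ²(E^{m+1})² − λ²(E^m)² = −Δt (E^m + E^{m+1})/2 · (J^m + J^{m+1}), i.e., the change in electric energy equals minus the midpoint work Δt E^{m+1/2} J^{m+1/2} (up to factor 2 of the 1/2 normalization). -/
/-- The semi-discrete field update satisfies the exact energy–work balance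
`(λ²/2)((E^{m+1})² − (E^m)²) = −Δt E^{m+1/2} J^{m+1/2}`. -/
theorem field_update_energy_work_balance
    (E0 J0 n lam Δt : ℝ) (hn : 0 < n) (hlam : 0 < lam)
    (hden : lam ^ 2 + (Δt ^ 2 / 4) * n ≠ 0) :
    let θ : ℝ := (Δt ^ 2 / 4) * n
    let E1 : ℝ := ((lam ^ 2 - θ) / (lam ^ 2 + θ)) * E0 - (Δt / (lam ^ 2 + θ)) * J0
    let J1 : ℝ := J0 + Δt * n * ((E0 + E1) / 2)
    lam ^ 2 / 2 * (E1 ^ 2 - E0 ^ 2) = -Δt * ((E0 + E1) / 2) * ((J0 + J1) / 2) := by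
  intro θ E1 J1
  simp only [θ, E1, J1]
  field_simp
  ring
end
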